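/- arXiv:2312.12690 — 5 statements merged into one kernel-verified Lean document; each statement's English description precedes it below -/
import Mathlib

section
/- Let n ≥ 2 and L ≥ 0 be integers with n+L ≥ 1, let a ∈ ℂ, and let i, j be integers with 0 ≤ i, j ≤ n−2. Then ∫_ℂ conj(z)^i · z^j · ω(z|a) dA(z) = (Γ(n−i−1)·Γ(i+L+1)/Γ(n+L+1)) · μ_{i,j}, where μ_{i,j} = i+L+2+(n−i)|a|² if i = j, μ_{i,j} = −(i+L+1)·a if j = i+1, μ_{i,j} = −(n−i−1)·conj(a) if i = j+1, and μ_{i,j} = 0 otherwise. -/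
open MeasureTheory Filter Finset

noncomputable section

/-- The Lebesgue measure on `ℂ` divided by `π`. -/
def dA : Measure ℂ := (ENNReal.ofReal Real.pi)⁻¹ • (volume : Measure ℂ)

/-- The deformed induced spherical weight
`ω(z|a) = (|z−a|² + (1+|a|²)(1+|z|²)/(n+L)) · |z|^{2L} · (1+|z|²)^{−(n+L+1)}`. -/
def omegaW (n L : ℕ) (a z : ℂ) : ℝ :=
  (‖z - a‖ ^ 2 +
      (1 + ‖a‖ ^ 2) * (1 + ‖z‖ ^ 2) / ((n : ℝ) + L)) *
    ‖z‖ ^ (2 * L) / (1 + ‖z‖ ^ 2) ^ (n + L + 1)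

/-- The tridiagonal coefficient `μ_{i,j}` of the moment matrix. -/
def muEntry (n L : ℕ) (a : ℂ) (i j : ℕ) : ℂ :=
  if i = j then ((i : ℂ) + L + 2 + ((n : ℂ) - i) * (‖a‖ ^ 2 : ℝ))
  else if j = i + 1 then -((i : ℂ) + L + 1) * a
  else if i = j + 1 then -((n : ℂ) - i - 1) * (starRingEnd ℂ a)
  else 0

/-! Expanding `|z - a|² = |z|² - a z̄ - ā z + |a|²` writes the moment as a combination of the
moments `∫ z̄^p z^q |z|^{2L} (1 + |z|²)^{-M} dA`. These vanish for `p ≠ q` by rotation invariance,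
and for `p = q` the substitution `t = |z|²` turns them into the Beta integral
`∫₀^∞ t^m (1 + t)^{-(m+k+2)} dt = Γ(m+1) Γ(k+1) / Γ(m+k+2)`. Only the three moments on the
diagonal `p = q` survive, and `Γ(x + 1) = x Γ(x)` expresses each as a multiple of
`Γ(n-i-1) Γ(i+L+1) / Γ(n+L+1)`. -/

open ComplexConjugate Real

theorem setIntegral_Ioi_comp_add_left {E : Type*} [NormedAddCommGroup E] [NormedSpace ℝ E]
    (f : ℝ → E) (c : ℝ) : ∫ t in Set.Ioi 0, f (c + t) = ∫ t in Set.Ioi c, f t := by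
  simpa using (measurePreserving_add_left volume c).setIntegral_preimage_emb
    (MeasurableEquiv.addLeft c).measurableEmbedding f (Set.Ioi c)

theorem integrableOn_Ioi_comp_add_left {E : Type*} [NormedAddCommGroup E] {f : ℝ → E} (c : ℝ) :
    IntegrableOn (fun t => f (c + t)) (Set.Ioi 0) ↔ IntegrableOn f (Set.Ioi c) := by
  simpa [Function.comp_def] using (measurePreserving_add_left volume c).integrableOn_comp_preimage
    (MeasurableEquiv.addLeft c).measurableEmbedding (f := f) (s := Set.Ioi c)

theorem integrableOn_Ioi_one_add_rpow {s : ℝ} (hs : s < -1) :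
    IntegrableOn (fun t : ℝ => (1 + t) ^ s) (Set.Ioi 0) :=
  (integrableOn_Ioi_comp_add_left 1).2 (integrableOn_Ioi_rpow_of_lt hs one_pos)

theorem integral_Ioi_one_add_rpow {s : ℝ} (hs : s < -1) :
    ∫ t in Set.Ioi 0, (1 + t) ^ s = -1 / (s + 1) := by
  rw [setIntegral_Ioi_comp_add_left (· ^ s), integral_Ioi_rpow_of_lt hs one_pos, one_rpow]

theorem integrableOn_Ioi_pow_div_one_add_pow {m N : ℕ} (h : m + 2 ≤ N) :
    IntegrableOn (fun t : ℝ => t ^ m / (1 + t) ^ N) (Set.Ioi 0) := by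
  refine (integrableOn_Ioi_one_add_rpow (s := -2) (by norm_num)).mono'
    (by fun_prop : Measurable fun t : ℝ => t ^ m / (1 + t) ^ N).aestronglyMeasurable ?_
  filter_upwards [ae_restrict_mem measurableSet_Ioi] with t (ht : 0 < t)
  rw [norm_of_nonneg (by positivity), rpow_neg (by positivity), rpow_two,
    div_le_iff₀ (by positivity), ← div_eq_inv_mul, le_div_iff₀ (by positivity)]
  calc t ^ m * (1 + t) ^ 2 ≤ (1 + t) ^ m * (1 + t) ^ 2 := by gcongr; linarith
    _ = (1 + t) ^ (m + 2) := by ring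
    _ ≤ (1 + t) ^ N := pow_le_pow_right₀ (by linarith) h

theorem integral_Ioi_pow_div_one_add_pow (m k : ℕ) :
    ∫ t in Set.Ioi 0, t ^ m / (1 + t) ^ (m + k + 2) =
      Gamma (m + 1) * Gamma (k + 1) / Gamma (m + k + 2) := by
  have hΓ : ∀ x : ℝ, 0 < x → Gamma (x + 1) = x * Gamma x := fun x hx => Gamma_add_one hx.ne'
  induction m generalizing k with
  | zero =>
    have hk : -((k : ℝ) + 2) < -1 := by linarith [k.cast_nonneg (α := ℝ)]
    have hpow : ∀ t ∈ Set.Ioi (0 : ℝ),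
        t ^ 0 / (1 + t) ^ (0 + k + 2) = (1 + t) ^ (-((k : ℝ) + 2)) := fun t (ht : 0 < t) => by
      rw [rpow_neg (by positivity), show (k : ℝ) + 2 = ((k + 2 : ℕ) : ℝ) by push_cast; ring,
        rpow_natCast]
      simp
    rw [setIntegral_congr_fun measurableSet_Ioi hpow, integral_Ioi_one_add_rpow hk,
      show -((k : ℝ) + 2) + 1 = -(k + 1) by ring, neg_div_neg_eq,
      show ((0 : ℕ) : ℝ) + k + 2 = k + 1 + 1 by push_cast; ring, hΓ ((k : ℝ) + 1) (by positivity)]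
    have := (Gamma_pos_of_pos (show (0 : ℝ) < k + 1 by positivity)).ne'
    simp only [Nat.cast_zero, zero_add, Gamma_one]
    field_simp
  | succ m ih =>
    have hsplit : ∀ t ∈ Set.Ioi (0 : ℝ), t ^ (m + 1) / (1 + t) ^ (m + 1 + k + 2) =
        t ^ m / (1 + t) ^ (m + k + 2) - t ^ m / (1 + t) ^ (m + (k + 1) + 2) := by
      intro t (ht : 0 < t)
      rw [show m + (k + 1) + 2 = m + k + 2 + 1 by ring, show m + 1 + k + 2 = m + k + 2 + 1 by ring]
      field_simp
      ring
    rw [setIntegral_congr_fun measurableSet_Ioi hsplit,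
      integral_sub (integrableOn_Ioi_pow_div_one_add_pow (by omega))
        (integrableOn_Ioi_pow_div_one_add_pow (by omega)), ih k, ih (k + 1)]
    push_cast
    rw [show (m : ℝ) + (k + 1) + 2 = m + k + 2 + 1 by ring,
      show (m : ℝ) + 1 + k + 2 = m + k + 2 + 1 by ring, hΓ ((m : ℝ) + 1) (by positivity),
      hΓ ((k : ℝ) + 1) (by positivity), hΓ ((m : ℝ) + k + 2) (by positivity)]
    have := (Gamma_pos_of_pos (show (0 : ℝ) < m + k + 2 by positivity)).ne'
    field_simp
    ring

theorem integral_dA_eq {E : Type*} [NormedAddCommGroup E] [NormedSpace ℝ E] (f : ℂ → E) :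
    ∫ z, f z ∂dA = π⁻¹ • ∫ z, f z := by
  rw [dA, integral_smul_measure, ENNReal.toReal_inv, ENNReal.toReal_ofReal pi_pos.le]

theorem integral_dA_comp_norm_sq (g : ℝ → ℝ) :
    ∫ z, g (‖z‖ ^ 2) ∂dA = ∫ t in Set.Ioi 0, g t := by
  have hball : (volume : Measure ℂ).real (Metric.ball 0 1) = π := by
    simp [measureReal_def, Complex.volume_ball]
  have hpolar := integral_fun_norm_addHaar (volume : Measure ℂ) (fun r => g (r ^ 2))
  rw [Complex.finrank_real_complex, hball] at hpolar
  rw [integral_dA_eq, hpolar, smul_comm 2 π, inv_smul_smul₀ pi_ne_zero,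
    ← integral_comp_rpow_Ioi_of_pos (g := g) two_pos, nsmul_eq_mul, Nat.cast_ofNat,
    ← integral_const_mul]
  refine setIntegral_congr_fun measurableSet_Ioi fun r (hr : 0 < r) => ?_
  rw [show (2 : ℝ) - 1 = (1 : ℕ) by norm_num, rpow_natCast, rpow_two]
  simp [mul_assoc]

theorem integral_conj_pow_mul_pow_mul_radial_eq_zero {p q : ℕ} (hpq : p ≠ q) (g : ℝ → ℂ) :
    ∫ z : ℂ, conj z ^ p * z ^ q * g ‖z‖ = 0 := by
  -- rotating by `c` multiplies the integrand by `c̄ ^ p * c ^ q = c ^ (q - p) = exp (π i)`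
  set c := Circle.exp (π / ((q : ℝ) - p))
  have hc : conj (c : ℂ) ^ p * (c : ℂ) ^ q ≠ 1 := by
    have hqp : (q : ℝ) - p ≠ 0 := sub_ne_zero.2 (Nat.cast_injective.ne hpq.symm)
    rw [← Circle.coe_inv_eq_conj, ← Circle.coe_pow, ← Circle.coe_pow, ← Circle.coe_mul,
      Ne, Circle.coe_eq_one, inv_pow, ← zpow_natCast, ← zpow_natCast, ← zpow_neg, ← zpow_add,
      neg_add_eq_sub, ← Circle.exp_intCast_mul]
    push_cast
    rw [mul_div_cancel₀ _ hqp]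
    exact Circle.exp_pi_ne_one
  have hrot : ∫ z : ℂ, conj z ^ p * z ^ q * g ‖z‖ =
      conj (c : ℂ) ^ p * (c : ℂ) ^ q * ∫ z : ℂ, conj z ^ p * z ^ q * g ‖z‖ := by
    rw [← integral_const_mul, ← integral_comp (rotation c)]
    congr 1
    ext z
    simp only [rotation_apply, map_mul, mul_pow, norm_mul, Circle.norm_coe, one_mul]
    ring
  by_contra hI
  exact hc ((mul_eq_right₀ hI).1 hrot.symm)

def radialWeight (L M : ℕ) (r : ℝ) : ℝ := r ^ (2 * L) / (1 + r ^ 2) ^ M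

theorem integrable_conj_pow_mul_pow_mul_radialWeight {p q L M : ℕ}
    (h : p + q + 2 * L + 2 < 2 * M) :
    Integrable (fun z : ℂ => conj z ^ p * z ^ q * (radialWeight L M ‖z‖ : ℂ)) dA := by
  set K := p + q + 2 * L
  have hr : (Module.finrank ℝ ℂ : ℝ) < 2 * M - K := by
    rw [Complex.finrank_real_complex, Nat.cast_ofNat]
    have : (K : ℝ) + 2 < 2 * M := by exact_mod_cast h
    linarith
  refine Integrable.smul_measure ?_ (by simp [pi_pos])
  refine (integrable_rpow_neg_one_add_norm_sq hr).mono'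
    (by unfold radialWeight; fun_prop (disch := exact fun z => by positivity) :
      Continuous _).aestronglyMeasurable (Eventually.of_forall fun z => ?_)
  have hB : 0 < 1 + ‖z‖ ^ 2 := by positivity
  have hnorm : ‖z‖ ≤ (1 + ‖z‖ ^ 2) ^ (1 / 2 : ℝ) := by
    rw [← sqrt_eq_rpow]
    exact le_sqrt_of_sq_le (by linarith)
  calc ‖conj z ^ p * z ^ q * (radialWeight L M ‖z‖ : ℂ)‖ = ‖z‖ ^ K / (1 + ‖z‖ ^ 2) ^ M := by
        simp only [radialWeight, norm_mul, norm_pow, RCLike.norm_conj, Complex.norm_real,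
          norm_div, norm_norm, Real.norm_of_nonneg hB.le, K, pow_add]
        ring
    _ ≤ ((1 + ‖z‖ ^ 2) ^ (1 / 2 : ℝ)) ^ K / (1 + ‖z‖ ^ 2) ^ M := by gcongr
    _ = (1 + ‖z‖ ^ 2) ^ (-(2 * M - K : ℝ) / 2) := by
        rw [← rpow_mul_natCast hB.le, ← rpow_sub_natCast hB.ne']
        ring_nf

def weightedMoment (L M p q : ℕ) : ℂ :=
  ∫ z, conj z ^ p * z ^ q * (radialWeight L M ‖z‖ : ℂ) ∂dA

theorem weightedMoment_eq_zero_of_ne {L M p q : ℕ} (hpq : p ≠ q) :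
    weightedMoment L M p q = 0 := by
  rw [weightedMoment, integral_dA_eq,
    integral_conj_pow_mul_pow_mul_radial_eq_zero hpq fun r => (radialWeight L M r : ℂ), smul_zero]

theorem weightedMoment_self_eq_Gamma {L M p : ℕ} {s t : ℝ} (hs : s = p + L + 1) (hst : s + t = M)
    (ht : 0 < t) : weightedMoment L M p p = (Gamma s * Gamma t / Gamma M : ℝ) := by
  obtain ⟨k, rfl⟩ : ∃ k, M = p + L + k + 2 := ⟨M - (p + L + 2), by
    have : (p : ℝ) + L + 1 < M := by linarith
    have : p + L + 1 < M := by exact_mod_cast this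
    omega⟩
  have hpt : ∀ z : ℂ, conj z ^ p * z ^ p * (radialWeight L (p + L + k + 2) ‖z‖ : ℂ) =
      ((‖z‖ ^ 2) ^ (p + L) / (1 + ‖z‖ ^ 2) ^ (p + L + k + 2) : ℝ) := by
    intro z
    rw [← mul_pow, Complex.conj_mul', radialWeight]
    push_cast
    ring
  rw [weightedMoment, funext hpt, integral_complex_ofReal,
    integral_dA_comp_norm_sq fun t => t ^ (p + L) / (1 + t) ^ (p + L + k + 2),
    integral_Ioi_pow_div_one_add_pow (p + L) k, hs, show t = k + 1 by push_cast at hst; linarith]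
  push_cast
  ring_nf

def momentScale (n L i : ℕ) : ℝ :=
  Gamma ((n : ℝ) - i - 1) * Gamma ((i : ℝ) + L + 1) / Gamma ((n : ℝ) + L + 1)

section MomentScale

variable {n L i : ℕ}

theorem weightedMoment_add_one_succ_succ (h : i + 2 ≤ n) :
    weightedMoment L (n + L + 1) (i + 1) (i + 1) = ((i + L + 1) * momentScale n L i : ℝ) := by
  have hin : (i : ℝ) + 2 ≤ n := by exact_mod_cast h
  rw [weightedMoment_self_eq_Gamma (s := i + L + 1 + 1) (t := n - i - 1) (by push_cast; ring)
    (by push_cast; ring) (by linarith), Gamma_add_one (s := (i : ℝ) + L + 1) (by positivity),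
    momentScale]
  push_cast
  ring

theorem weightedMoment_add_one_self (h : i + 2 ≤ n) :
    weightedMoment L (n + L + 1) i i = ((n - i - 1) * momentScale n L i : ℝ) := by
  have hin : (i : ℝ) + 2 ≤ n := by exact_mod_cast h
  rw [weightedMoment_self_eq_Gamma (s := i + L + 1) (t := n - i - 1 + 1) rfl
    (by push_cast; ring) (by linarith), Gamma_add_one (s := (n : ℝ) - i - 1) (by linarith),
    momentScale]
  push_cast
  ring

theorem weightedMoment_self (h : i + 2 ≤ n) :
    weightedMoment L (n + L) i i = ((n + L) * momentScale n L i : ℝ) := by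
  have hin : (i : ℝ) + 2 ≤ n := by exact_mod_cast h
  have hnL : (0 : ℝ) < n + L := by linarith [L.cast_nonneg (α := ℝ)]
  rw [weightedMoment_self_eq_Gamma (s := i + L + 1) (t := n - i - 1) rfl
    (by push_cast; ring) (by linarith), momentScale, Gamma_add_one hnL.ne']
  have := (Gamma_pos_of_pos hnL).ne'
  congr 1
  push_cast
  field_simp

end MomentScale

theorem omegaW_eq_radialWeight (n L : ℕ) (a z : ℂ) :
    omegaW n L a z = ‖z - a‖ ^ 2 * radialWeight L (n + L + 1) ‖z‖ +
      (1 + ‖a‖ ^ 2) / (n + L) * radialWeight L (n + L) ‖z‖ := by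
  have : 1 + ‖z‖ ^ 2 ≠ 0 := by positivity
  simp only [omegaW, radialWeight, pow_succ]
  field_simp

theorem conj_pow_mul_pow_mul_omegaW (n L i j : ℕ) (a z : ℂ) :
    conj z ^ i * z ^ j * (omegaW n L a z : ℂ) =
      conj z ^ (i + 1) * z ^ (j + 1) * (radialWeight L (n + L + 1) ‖z‖ : ℂ)
        - conj a * (conj z ^ i * z ^ (j + 1) * (radialWeight L (n + L + 1) ‖z‖ : ℂ))
        - a * (conj z ^ (i + 1) * z ^ j * (radialWeight L (n + L + 1) ‖z‖ : ℂ))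
        + (‖a‖ ^ 2 : ℝ) * (conj z ^ i * z ^ j * (radialWeight L (n + L + 1) ‖z‖ : ℂ))
        + ((1 + ‖a‖ ^ 2) / (n + L) : ℝ) *
          (conj z ^ i * z ^ j * (radialWeight L (n + L) ‖z‖ : ℂ)) := by
  simp only [omegaW_eq_radialWeight, Complex.ofReal_add, Complex.ofReal_mul, Complex.ofReal_pow,
    ← Complex.conj_mul', map_sub]
  ring

theorem integral_conj_pow_mul_pow_mul_omegaW {n L i j : ℕ} (h : i + j + 2 < 2 * n) (a : ℂ) :
    ∫ z, conj z ^ i * z ^ j * (omegaW n L a z : ℂ) ∂dA =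
      weightedMoment L (n + L + 1) (i + 1) (j + 1) - conj a * weightedMoment L (n + L + 1) i (j + 1)
        - a * weightedMoment L (n + L + 1) (i + 1) j
        + (‖a‖ ^ 2 : ℝ) * weightedMoment L (n + L + 1) i j
        + ((1 + ‖a‖ ^ 2) / (n + L) : ℝ) * weightedMoment L (n + L) i j := by
  have hI : ∀ p q M, p + q + 2 * L + 2 < 2 * M →
      Integrable (fun z : ℂ => conj z ^ p * z ^ q * (radialWeight L M ‖z‖ : ℂ)) dA :=
    fun _ _ _ h => integrable_conj_pow_mul_pow_mul_radialWeight h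
  have h₁ := hI (i + 1) (j + 1) (n + L + 1) (by omega)
  have h₂ := (hI i (j + 1) (n + L + 1) (by omega)).const_mul (conj a)
  have h₃ := (hI (i + 1) j (n + L + 1) (by omega)).const_mul a
  have h₄ := (hI i j (n + L + 1) (by omega)).const_mul (‖a‖ ^ 2 : ℝ)
  have h₅ := (hI i j (n + L) (by omega)).const_mul ((1 + ‖a‖ ^ 2) / (n + L) : ℝ)
  simp only [conj_pow_mul_pow_mul_omegaW]
  rw [integral_add, integral_add, integral_sub, integral_sub]
  · simp only [integral_const_mul, weightedMoment]
  exacts [h₁, h₂, h₁.sub h₂, h₃, (h₁.sub h₂).sub h₃, h₄, ((h₁.sub h₂).sub h₃).add h₄, h₅]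

theorem moment_matrix_deformed_weight_general (n L : ℕ) (hn : 2 ≤ n)
    (a : ℂ) (i j : ℕ) (hi : i ≤ n - 2) (hj : j ≤ n - 2) :
    (∫ z : ℂ, (starRingEnd ℂ z) ^ i * z ^ j * (omegaW n L a z : ℂ) ∂dA)
      = ((Real.Gamma ((n : ℝ) - i - 1) * Real.Gamma ((i : ℝ) + L + 1) /
            Real.Gamma ((n : ℝ) + L + 1) : ℝ) : ℂ) * muEntry n L a i j := by
  have hin : i + 2 ≤ n := by omega
  change _ = (momentScale n L i : ℂ) * _
  rw [integral_conj_pow_mul_pow_mul_omegaW (by omega)]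
  rcases eq_or_ne i j with rfl | hij
  · simp (disch := omega) only [weightedMoment_eq_zero_of_ne]
    rw [weightedMoment_add_one_succ_succ hin, weightedMoment_add_one_self hin,
      weightedMoment_self hin]
    have : (n : ℂ) + L ≠ 0 := by exact_mod_cast (show n + L ≠ 0 by omega)
    simp only [muEntry, if_true]
    push_cast
    field_simp
    ring
  rcases eq_or_ne j (i + 1) with rfl | hji
  · simp (disch := omega) only [weightedMoment_eq_zero_of_ne]
    rw [weightedMoment_add_one_succ_succ hin]
    simp only [muEntry, if_neg hij, if_true]
    push_cast
    ring
  rcases eq_or_ne i (j + 1) with rfl | hij'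
  · simp (disch := omega) only [weightedMoment_eq_zero_of_ne]
    rw [weightedMoment_add_one_self hin]
    simp only [muEntry, if_neg hij, if_neg hji, if_true]
    push_cast
    ring
  · simp (disch := omega) only [weightedMoment_eq_zero_of_ne]
    simp only [muEntry, if_neg hij, if_neg hji, if_neg hij']
    ring

/-- The moments of the deformed induced spherical weight form a tridiagonal matrix. -/
theorem moment_matrix_deformed_weight (n L : ℕ) (hn : 2 ≤ n) (hnL : 1 ≤ n + L)
    (a : ℂ) (i j : ℕ) (hi : i ≤ n - 2) (hj : j ≤ n - 2) :
    (∫ z : ℂ, (starRingEnd ℂ z) ^ i * z ^ j * (omegaW n L a z : ℂ) ∂dA)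
      = ((Real.Gamma ((n : ℝ) - i - 1) * Real.Gamma ((i : ℝ) + L + 1) /
            Real.Gamma ((n : ℝ) + L + 1) : ℝ) : ℂ) * muEntry n L a i j :=
  moment_matrix_deformed_weight_general n L hn a i j hi hj
end
end

section
/- Let n ≥ 2 and L ≥ 0 be integers and let x ≠ 0 be a real number. Define r : ℕ → ℝ by r_0 = 1, r_1 = L+2+n·x, and r_{p+1} = ((n−p)·x + p+L+2)·r_p − x·(p+L)·(n−p−1)·r_{p−1} for p ≥ 1. Then for every p ≥ 0 one has r_p = (Γ(n+1)·Γ(L+p+1)/Γ(L+n+1)) · g_p^{(n,L)}(x). -/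
open Finset

noncomputable section

/-- `g_m^{(n,L)}(x)`. -/
def gP (n L m : ℕ) (x : ℝ) : ℝ :=
  ((x - (L : ℝ) / n) / x) *
      ∑ k ∈ Finset.range (m + 1), ((m : ℝ) + 1 - k) * (Nat.choose (L + n) (L + k) : ℝ) * x ^ k
    + ((L : ℝ) * ((m : ℝ) + 1) / ((n : ℝ) * x)) * (Nat.choose (L + n) L : ℝ)

def Ssum (n L : ℕ) (x : ℝ) (m : ℕ) : ℝ :=
  ∑ k ∈ Finset.range (m + 1), ((m : ℝ) + 1 - k) * (Nat.choose (L + n) (L + k) : ℝ) * x ^ k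

def Tsum (n L : ℕ) (x : ℝ) (m : ℕ) : ℝ :=
  ∑ k ∈ Finset.range (m + 1), (Nat.choose (L + n) (L + k) : ℝ) * x ^ k

lemma gP_eq (n L m : ℕ) (x : ℝ) :
    gP n L m x = ((x - (L : ℝ) / n) / x) * Ssum n L x m
      + ((L : ℝ) * ((m : ℝ) + 1) / ((n : ℝ) * x)) * (Nat.choose (L + n) L : ℝ) := rfl

lemma choose_id (n L m : ℕ) :
    ((L:ℝ)+m+1) * ((L+n).choose (L+m+1) : ℝ) = ((n:ℝ) - m) * ((L+n).choose (L+m) : ℝ) := by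
  rcases le_or_gt m n with hm | hm
  · have h : (L+n).choose (L+m+1) * (L+m+1) = (L+n).choose (L+m) * (n - m) := by
      rw [Nat.choose_succ_right_eq]; congr 1; omega
    have h' : (((L+n).choose (L+m+1) : ℝ)) * ((L:ℝ)+m+1)
        = ((L+n).choose (L+m) : ℝ) * ((n:ℝ) - m) := by
      have := congrArg (Nat.cast : ℕ → ℝ) h
      push_cast [Nat.cast_sub hm] at this
      linear_combination this
    linarith [h']
  · have h1 : (L+n).choose (L+m+1) = 0 := Nat.choose_eq_zero_of_lt (by omega)
    have h2 : (L+n).choose (L+m) = 0 := Nat.choose_eq_zero_of_lt (by omega)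
    rw [h1, h2]; simp

lemma hT (n L : ℕ) (x : ℝ) (m : ℕ) :
    Tsum n L x (m+1) = Tsum n L x m + ((L+n).choose (L+(m+1)) : ℝ) * x ^ (m+1) := by
  unfold Tsum
  rw [Finset.sum_range_succ]

lemma hS (n L : ℕ) (x : ℝ) (m : ℕ) :
    Ssum n L x (m+1) = Ssum n L x m + Tsum n L x (m+1) := by
  unfold Ssum Tsum
  have e : ∀ k ∈ Finset.range (m+1+1),
      (((m+1 : ℕ) : ℝ) + 1 - k) * ((L+n).choose (L+k) : ℝ) * x ^ k
      = ((m : ℝ) + 1 - k) * ((L+n).choose (L+k) : ℝ) * x ^ k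
        + ((L+n).choose (L+k) : ℝ) * x ^ k := by
    intro k _; push_cast; ring
  rw [Finset.sum_congr rfl e, Finset.sum_add_distrib, Finset.sum_range_succ]
  push_cast
  ring

lemma phi_const (n L : ℕ) (x : ℝ) (q : ℕ) :
    ((L:ℝ)+q+2) * Ssum n L x (q+2) - (((n:ℝ)-q-1)*x + ((q:ℝ)+L+3)) * Ssum n L x (q+1)
      + x*((n:ℝ)-q-2) * Ssum n L x q = (L:ℝ) * ((L+n).choose L : ℝ) := by
  induction q with
  | zero =>
    have c0 := choose_id n L 0
    have c1 := choose_id n L 1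
    simp only [Ssum, Finset.sum_range_succ, Finset.sum_range_zero, Nat.add_zero] at *
    push_cast at *
    linear_combination x * c0 + x^2 * c1
  | succ q ih =>
    have h1 : Ssum n L x (q+3) = Ssum n L x (q+2) + Tsum n L x (q+3) := hS n L x (q+2)
    have h2 : Ssum n L x (q+2) = Ssum n L x (q+1) + Tsum n L x (q+2) := hS n L x (q+1)
    have h3 : Ssum n L x (q+1) = Ssum n L x q + Tsum n L x (q+1) := hS n L x q
    have t1 : Tsum n L x (q+3) = Tsum n L x (q+2) + ((L+n).choose (L+q+3) : ℝ) * x ^ (q+3) := by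
      have h := hT n L x (q+2)
      rwa [show L+(q+2+1) = L+q+3 from by omega, show q+2+1 = q+3 from by omega] at h
    have t2 : Tsum n L x (q+2) = Tsum n L x (q+1) + ((L+n).choose (L+q+2) : ℝ) * x ^ (q+2) := by
      have h := hT n L x (q+1)
      rwa [show L+(q+1+1) = L+q+2 from by omega, show q+1+1 = q+2 from by omega] at h
    have c : ((L:ℝ)+q+3) * ((L+n).choose (L+q+3) : ℝ)
        = ((n:ℝ) - q - 2) * ((L+n).choose (L+q+2) : ℝ) := by
      have h := choose_id n L (q+2)
      push_cast at h
      rw [show L+(q+2)+1 = L+q+3 from by omega, show L+(q+2) = L+q+2 from by omega] at h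
      linear_combination h
    simp only [show q+1+2 = q+3 from by omega, show q+1+1 = q+2 from by omega]
    push_cast
    rw [h1, t1, h2, t2, h3]
    rw [h2, t2, h3] at ih
    linear_combination ih + x^(q+3) * c

lemma gP_step (n L : ℕ) (hn0 : (n:ℝ) ≠ 0) (x : ℝ) (hx : x ≠ 0) (q : ℕ) :
    ((L:ℝ)+q+2) * gP n L (q+2) x
      = (((n:ℝ)-q-1)*x + ((q:ℝ)+L+3)) * gP n L (q+1) x
        - x * ((n:ℝ)-q-2) * gP n L q x := by
  have hphi := phi_const n L x q
  rw [gP_eq, gP_eq, gP_eq]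
  push_cast
  field_simp
  ring_nf
  ring_nf at hphi
  linear_combination (n*x - (L:ℝ)) * hphi

lemma gP_zero (n L : ℕ) (hn0 : (n:ℝ) ≠ 0) (x : ℝ) (hx : x ≠ 0) :
    gP n L 0 x = ((L+n).choose L : ℝ) := by
  rw [gP_eq]
  have h : Ssum n L x 0 = ((L+n).choose L : ℝ) := by
    unfold Ssum
    rw [Finset.sum_range_one]
    norm_num
  rw [h]
  field_simp
  ring

/-- The unique solution of the three-term recurrence arising from the LDU decomposition
of the moment matrix is `r_p = Γ(n+1)Γ(L+p+1)/Γ(L+n+1) · g_p^{(n,L)}(x)`. -/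
theorem recurrence_solution (n L : ℕ) (hn : 2 ≤ n) (x : ℝ) (hx : x ≠ 0)
    (r : ℕ → ℝ) (h0 : r 0 = 1) (h1 : r 1 = (L : ℝ) + 2 + n * x)
    (hrec : ∀ p : ℕ, 1 ≤ p →
      r (p + 1) = (((n : ℝ) - p) * x + p + L + 2) * r p
        - x * ((p : ℝ) + L) * ((n : ℝ) - p - 1) * r (p - 1)) :
    ∀ p : ℕ, r p = (Real.Gamma ((n : ℝ) + 1) * Real.Gamma ((L : ℝ) + p + 1) /
        Real.Gamma ((L : ℝ) + n + 1)) * gP n L p x := by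
  have hn0 : (n:ℝ) ≠ 0 := by
    exact_mod_cast (by omega : n ≠ 0)
  have hfac : ((L+n).choose L : ℝ) * (L.factorial : ℝ) * (n.factorial : ℝ)
      = ((L+n).factorial : ℝ) := by
    have h := Nat.choose_mul_factorial_mul_factorial (Nat.le_add_right L n)
    rw [show L+n-L = n from by omega] at h
    exact_mod_cast congrArg (Nat.cast : ℕ → ℝ) h
  have hfL : ∀ m : ℕ, ((L+m+1).factorial : ℝ) = ((L:ℝ)+m+1) * ((L+m).factorial : ℝ) := by
    intro m
    rw [show L+m+1 = (L+m)+1 from rfl, Nat.factorial_succ]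
    push_cast; ring
  -- main polynomial identity, by two-step induction
  have key : ∀ p : ℕ, ((L+n).factorial : ℝ) * r p
      = (n.factorial : ℝ) * ((L+p).factorial : ℝ) * gP n L p x := by
    have key2 : ∀ p : ℕ, (((L+n).factorial : ℝ) * r p
        = (n.factorial : ℝ) * ((L+p).factorial : ℝ) * gP n L p x)
      ∧ (((L+n).factorial : ℝ) * r (p+1)
        = (n.factorial : ℝ) * ((L+(p+1)).factorial : ℝ) * gP n L (p+1) x) := by
      intro p
      induction p with
      | zero =>
        constructor
        · rw [h0, gP_zero n L hn0 x hx]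
          simp only [Nat.add_zero, mul_one]
          linear_combination -hfac
        · rw [h1]
          have hc : ((L:ℝ)+1) * ((L+n).choose (L+1) : ℝ) = (n:ℝ) * ((L+n).choose L : ℝ) := by
            have h := choose_id n L 0
            push_cast at h
            rw [show L+0+1 = L+1 from rfl, show L+0 = L from rfl] at h
            linear_combination h
          have hfl : ((L+1).factorial : ℝ) = ((L:ℝ)+1) * (L.factorial : ℝ) := by
            rw [Nat.factorial_succ]; push_cast; ring
          rw [gP_eq]
          have hs1 : Ssum n L x 1
              = 2 * ((L+n).choose L : ℝ) + ((L+n).choose (L+1) : ℝ) * x := by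
            unfold Ssum
            rw [Finset.sum_range_succ, Finset.sum_range_one]
            push_cast
            ring_nf
          rw [show (0:ℕ)+1 = 1 from rfl] at *
          rw [hs1, hfl]
          push_cast
          field_simp
          linear_combination (-((n:ℝ)*x*((L:ℝ)+2+(n:ℝ)*x))) * hfac
            - ((n.factorial:ℝ)*(L.factorial:ℝ)*x*((n:ℝ)*x-(L:ℝ))) * hc
      | succ p ih =>
        refine ⟨ih.2, ?_⟩
        have hr := hrec (p+1) (by omega)
        rw [show p+1-1 = p from by omega] at hr
        have gstep := gP_step n L hn0 x hx p
        have ih1 := ih.1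
        have ih2 := ih.2
        rw [show L+(p+1+1) = (L+p+1)+1 from by omega, Nat.factorial_succ,
          show L+(p+1) = (L+p)+1 from by omega, Nat.factorial_succ] at *
        rw [hr]
        push_cast at *
        linear_combination (((n:ℝ) - (p+1))*x + (p+1) + L + 2) * ih2
          - x*((p:ℝ)+1+L)*((n:ℝ)-(p+1)-1) * ih1
          - ((n.factorial : ℝ) * (((L:ℝ)+p+1) * ((L+p).factorial : ℝ))) * gstep
    exact fun p => (key2 p).1
  intro p
  have g1 : Real.Gamma ((n:ℝ) + 1) = (n.factorial : ℝ) := by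
    exact_mod_cast Real.Gamma_nat_eq_factorial n
  have g2 : Real.Gamma ((L:ℝ) + p + 1) = ((L+p).factorial : ℝ) := by
    rw [show (L:ℝ)+p+1 = ((L+p : ℕ) : ℝ)+1 from by push_cast; ring]
    exact_mod_cast Real.Gamma_nat_eq_factorial (L+p)
  have g3 : Real.Gamma ((L:ℝ) + n + 1) = ((L+n).factorial : ℝ) := by
    rw [show (L:ℝ)+n+1 = ((L+n : ℕ) : ℝ)+1 from by push_cast; ring]
    exact_mod_cast Real.Gamma_nat_eq_factorial (L+n)
  rw [g1, g2, g3]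
  have hfn : ((L+n).factorial : ℝ) ≠ 0 := by
    exact_mod_cast Nat.factorial_ne_zero (L+n)
  field_simp
  linear_combination key p
end
end

section
/- Let N ≥ 0, L ≥ 1 and n be integers with n ≥ N+2, and let x > 0 be a real number with n·x ≠ L. Then g_N^{(n,L)}(x) = ((x − L/n)/(x·(1+x))) · ĝ_N^{(n,L)}(x). -/
open Finset

noncomputable section

/-- `q_N^{(n,L)}(y) = ∑_{k=0}^{N} Γ(L+n+1)/(Γ(k+L+1)Γ(n+1−k)) y^k`. -/
def qS (n L : ℝ) (N : ℕ) (y : ℝ) : ℝ :=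
  ∑ k ∈ Finset.range (N + 1),
    Real.Gamma (L + n + 1) / (Real.Gamma ((k : ℝ) + L + 1) * Real.Gamma (n + 1 - k)) * y ^ k

/-- `q̂_N^{(n,L)}(y|x)`. -/
def qhat (n L : ℝ) (N : ℕ) (y x : ℝ) : ℝ :=
  qS n L N y + (1 / (n * x - L)) * (Real.Gamma (L + n + 1) / (Real.Gamma (n + 1) * Real.Gamma L))

/-- `ĝ_N^{(n,L)}(x) = (L+N+1) q̂_{N+1}^{(n,L)}(x|x) − x(n−N−1) q̂_N^{(n,L)}(x|x)`. -/
def ghat (n L : ℝ) (N : ℕ) (x : ℝ) : ℝ :=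
  (L + (N : ℝ) + 1) * qhat n L (N + 1) x x - x * (n - N - 1) * qhat n L N x x

/-!
For natural `L` and `n` the Gamma quotients in `q_N` are the binomial coefficients
`c_k = C(L+n, L+k)` (for `k > n` both vanish: `Γ(n+1-k)` sits at a pole, where Mathlib's `Γ`
is `0` and so is the quotient), and `Γ(L+n+1)/(Γ(n+1)Γ(L)) = L·c_0`. The recurrence
`(L+k+1)·c_{k+1} = (n-k)·c_k` gives, by induction on `N`,
`(1+x)·S_N + x(n-N-1)·Q_N + L·c_0 = (L+N+1)·Q_{N+1}`, where `Q_M = ∑_{k ≤ M} c_k x^k` and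
`S_N = ∑_{k ≤ N} (N+1-k)·c_k x^k`. Consequently `g_N` and `ĝ_N` are the multiples
`(x - L/n)/x` and `1 + x` of the same quantity `S_N + (N+1)·L·c_0/(nx - L)`.
-/

theorem Real.Gamma_div_Gamma_mul_Gamma_eq_choose (L n k : ℕ) :
    Real.Gamma ((L : ℝ) + n + 1)
        / (Real.Gamma ((k : ℝ) + L + 1) * Real.Gamma ((n : ℝ) + 1 - k))
      = (Nat.choose (L + n) (L + k) : ℝ) := by
  rcases le_or_gt k n with hk | hk
  · have hsub : ((n : ℝ) + 1 - k) = ((n - k : ℕ) : ℝ) + 1 := by push_cast [hk]; ring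
    rw [Nat.cast_choose ℝ (by omega), show L + n - (L + k) = n - k by omega, hsub,
      ← Nat.cast_add, ← Nat.cast_add, Real.Gamma_nat_eq_factorial,
      Real.Gamma_nat_eq_factorial, Real.Gamma_nat_eq_factorial, add_comm k L]
  · have hpole : ((n : ℝ) + 1 - k) = -((k - (n + 1) : ℕ) : ℝ) := by
      push_cast [show n + 1 ≤ k by omega]; ring
    rw [hpole, Real.Gamma_neg_nat_eq_zero, mul_zero, div_zero,
      Nat.choose_eq_zero_of_lt (by omega), Nat.cast_zero]

theorem Real.Gamma_div_Gamma_mul_Gamma_eq_mul_choose (L n : ℕ) :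
    Real.Gamma ((L : ℝ) + n + 1) / (Real.Gamma ((n : ℝ) + 1) * Real.Gamma L)
      = L * (Nat.choose (L + n) L : ℝ) := by
  rcases L with _ | L
  · simp
  · rw [Nat.cast_choose ℝ (by omega), show L + 1 + n - (L + 1) = n by omega,
      ← Nat.cast_add, Real.Gamma_nat_eq_factorial, Real.Gamma_nat_eq_factorial, Nat.cast_succ,
      Real.Gamma_nat_eq_factorial, Nat.factorial_succ]
    push_cast
    field_simp

theorem Nat.cast_choose_succ_mul {R : Type*} [CommRing R] (m j : ℕ) :
    ((j : R) + 1) * (m.choose (j + 1) : R) = ((m : R) - j) * (m.choose j : R) := by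
  rcases le_or_gt j m with hj | hj
  · have h := congrArg (Nat.cast (R := R)) (Nat.choose_succ_right_eq m j)
    push_cast [hj] at h
    linear_combination h
  · rw [Nat.choose_eq_zero_of_lt hj, Nat.choose_eq_zero_of_lt (by omega)]
    simp

theorem qS_natCast (n L N : ℕ) (y : ℝ) :
    qS n L N y = ∑ k ∈ range (N + 1), (Nat.choose (L + n) (L + k) : ℝ) * y ^ k := by
  simp only [qS, Real.Gamma_div_Gamma_mul_Gamma_eq_choose]

theorem sum_range_mul_pow_of_recurrence {R : Type*} [CommRing R] {L n x : R} {c : ℕ → R}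
    (hc : ∀ k : ℕ, (L + k + 1) * c (k + 1) = (n - k) * c k) (N : ℕ) :
    (1 + x) * ∑ k ∈ range (N + 1), ((N : R) + 1 - k) * c k * x ^ k
        + x * (n - N - 1) * ∑ k ∈ range (N + 1), c k * x ^ k + L * c 0
      = (L + N + 1) * ∑ k ∈ range (N + 2), c k * x ^ k := by
  induction N with
  | zero =>
    simp only [zero_add, sum_range_succ, range_zero, sum_empty, Nat.cast_zero]
    linear_combination -x * hc 0
  | succ N ih =>
    have hweighted : ∑ k ∈ range (N + 2), ((↑(N + 1) : R) + 1 - k) * c k * x ^ k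
        = ∑ k ∈ range (N + 1), ((N : R) + 1 - k) * c k * x ^ k
          + ∑ k ∈ range (N + 2), c k * x ^ k := by
      rw [sum_range_succ _ (N + 1), sum_range_succ _ (N + 1), ← add_assoc, ← sum_add_distrib]
      push_cast
      congr 1
      · exact sum_congr rfl fun k _ => by ring
      · ring
    rw [hweighted, sum_range_succ _ (N + 2), sum_range_succ (fun k => c k * x ^ k) (N + 1)]
    rw [sum_range_succ (fun k => c k * x ^ k) (N + 1)] at ih
    have hstep := hc (N + 1)
    push_cast at ih hstep ⊢
    linear_combination ih - x ^ (N + 2) * hstep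

def gCommon (n L N : ℕ) (x : ℝ) : ℝ :=
  ∑ k ∈ range (N + 1), ((N : ℝ) + 1 - k) * (Nat.choose (L + n) (L + k) : ℝ) * x ^ k
    + (N + 1) * (L * (Nat.choose (L + n) L : ℝ)) / (n * x - L)

theorem gP_eq_mul_gCommon (N L n : ℕ) {x : ℝ} (hn : (n : ℝ) ≠ 0) (hx : x ≠ 0)
    (hxL : (n : ℝ) * x ≠ L) :
    gP n L N x = ((x - L / n) / x) * gCommon n L N x := by
  have hd : x * n - L ≠ 0 := by rw [mul_comm]; exact sub_ne_zero.mpr hxL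
  rw [gP, gCommon]
  field_simp

theorem ghat_eq_mul_gCommon (N L n : ℕ) {x : ℝ} (hxL : (n : ℝ) * x ≠ L) :
    ghat n L N x = (1 + x) * gCommon n L N x := by
  have hrec : ∀ k : ℕ, ((L : ℝ) + k + 1) * (Nat.choose (L + n) (L + (k + 1)) : ℝ)
      = ((n : ℝ) - k) * (Nat.choose (L + n) (L + k) : ℝ) := fun k => by
    have h := Nat.cast_choose_succ_mul (R := ℝ) (L + n) (L + k)
    push_cast at h
    rw [← Nat.add_assoc]
    linear_combination h
  have key := sum_range_mul_pow_of_recurrence (x := x)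
    (c := fun k => (Nat.choose (L + n) (L + k) : ℝ)) hrec N
  rw [Nat.add_zero] at key
  have hd : (n : ℝ) * x - L ≠ 0 := sub_ne_zero.mpr hxL
  rw [ghat, qhat, qhat, qS_natCast, qS_natCast, Real.Gamma_div_Gamma_mul_Gamma_eq_mul_choose,
    gCommon, show N + 1 + 1 = N + 2 from rfl]
  field_simp
  linear_combination -(n * x - L) * key

theorem g_eq_ghat_general (N L n : ℕ) (hn : N + 2 ≤ n)
    (x : ℝ) (hx : 0 < x) (hxL : (n : ℝ) * x ≠ L) :
    gP n L N x = ((x - (L : ℝ) / n) / (x * (1 + x))) * ghat n L N x := by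
  have hn0 : (n : ℝ) ≠ 0 := by norm_cast; omega
  rw [gP_eq_mul_gCommon N L n hn0 hx.ne' hxL, ghat_eq_mul_gCommon N L n hxL]
  field_simp

/-- The relation `g_N^{(n,L)}(x) = ((x − L/n)/(x(1+x))) ĝ_N^{(n,L)}(x)`. -/
theorem g_eq_ghat (N L n : ℕ) (hL : 1 ≤ L) (hn : N + 2 ≤ n)
    (x : ℝ) (hx : 0 < x) (hxL : (n : ℝ) * x ≠ L) :
    gP n L N x = ((x - (L : ℝ) / n) / (x * (1 + x))) * ghat n L N x :=
  g_eq_ghat_general N L n hn x hx hxL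
end
end

section
/- Let L > 0 and b > 0 be real numbers, and let χ > 0 be a real number with χ² ≠ L. For each positive integer N set n_N = (b+1)·N, δ_N = (n_N + L + 1)/N and λ_N = χ/√(N·δ_N). Then lim_{N→∞} (1/N) · ĝ_N^{(n_N,L)}(λ_N²) · λ_N^{2L} · (1+λ_N²)^{−(n_N+L+1)} = (χ²)^L · ((χ²−L)·E_{1,L+1}(χ²) + 1/Γ(L)) · e^{−χ²} / (χ² − L), where all powers with real exponents are real powers. -/
open Finset Filter

noncomputable section

/-- The two-parametric Mittag-Leffler function `E_{1,β}(y)` with first parameter `1`. -/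
def mittagLeffler1 (β : ℝ) (y : ℝ) : ℝ := ∑' k : ℕ, y ^ k / Real.Gamma ((k : ℝ) + β)

/-!
Put `p = n + L + 1` and `x = y / p`. The `k`-th term of `x^L q_N^{(n,L)}(x)` is
`y^L y^k / Γ(k+L+1)` times `Γ(p) / (Γ(p-L-k) p^{L+k})`; by log-convexity of `Γ` this factor
lies in `[((p-L-k-1)/p)^{L+k}, 1]`, so it tends to `1`, and Tannery's theorem gives
`x^L q_N(x) → y^L E_{1,L+1}(y)` as long as the truncation `N` tends to `∞` and stays
below `n + 1`.
The correction term of `q̂` contributes `y^L / ((y-L) Γ(L))`, since `n x → y`. In `ĝ_N / N` the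
first coefficient `(L+N+1)/N` tends to `1`, the second `x (n-N-1)/N` to `0`, and
`(1+x)^{-p} → e^{-y}`; with `y = χ²` and `λ_N² = y / p` this is the claim.
-/

open Real Topology

lemma log_Gamma_add_one_sub_log_Gamma {s : ℝ} (hs : 0 < s) :
    log (Gamma (s + 1)) - log (Gamma s) = log s := by
  rw [Gamma_add_one hs.ne', log_mul hs.ne' (Gamma_pos_of_pos hs).ne', add_sub_cancel_right]

lemma Gamma_le_Gamma_sub_mul_rpow {a t : ℝ} (ha : 0 ≤ a) (hta : 0 < t - a) :
    Gamma t ≤ Gamma (t - a) * t ^ a := by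
  rcases ha.eq_or_lt with rfl | ha
  · simp
  have ht : 0 < t := by linarith
  have hslope := convexOn_log_Gamma.slope_mono_adjacent (x := t - a) (y := t) (z := t + 1)
    hta (show (0 : ℝ) < t + 1 by linarith) (by linarith) (by linarith)
  simp only [Function.comp_apply, sub_sub_cancel, add_sub_cancel_left, div_one,
    log_Gamma_add_one_sub_log_Gamma ht, div_le_iff₀ ha] at hslope
  calc Gamma t = exp (log (Gamma t)) := (exp_log (Gamma_pos_of_pos ht)).symm
    _ ≤ exp (log (Gamma (t - a)) + log t * a) := exp_le_exp.2 (by linarith)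
    _ = Gamma (t - a) * t ^ a := by
      rw [exp_add, exp_log (Gamma_pos_of_pos hta), rpow_def_of_pos ht]

lemma Gamma_sub_mul_rpow_le_Gamma {a t : ℝ} (ha : 0 ≤ a) (hta : 1 < t - a) :
    Gamma (t - a) * (t - a - 1) ^ a ≤ Gamma t := by
  rcases ha.eq_or_lt with rfl | ha
  · simp
  have hslope := convexOn_log_Gamma.slope_mono_adjacent (x := t - a - 1) (y := t - a) (z := t)
    (by simpa using hta) (by simp; linarith) (by linarith) (by linarith)
  have hstep := log_Gamma_add_one_sub_log_Gamma (s := t - a - 1) (by linarith)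
  rw [sub_add_cancel] at hstep
  simp only [Function.comp_apply, sub_sub_cancel, div_one, hstep, le_div_iff₀ ha] at hslope
  calc Gamma (t - a) * (t - a - 1) ^ a
      = exp (log (Gamma (t - a)) + log (t - a - 1) * a) := by
        rw [exp_add, exp_log (Gamma_pos_of_pos (by linarith)), rpow_def_of_pos (by linarith)]
    _ ≤ exp (log (Gamma t)) := exp_le_exp.2 (by linarith)
    _ = Gamma t := exp_log (Gamma_pos_of_pos (by linarith))

def gammaRatio (a t : ℝ) : ℝ := Gamma t / (Gamma (t - a) * t ^ a)

lemma gammaRatio_nonneg {a t : ℝ} (hta : 0 < t - a) (ht : 0 < t) : 0 ≤ gammaRatio a t := by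
  have := Gamma_pos_of_pos hta
  have := Gamma_pos_of_pos ht
  unfold gammaRatio
  positivity

lemma gammaRatio_le_one {a t : ℝ} (ha : 0 ≤ a) (hta : 0 < t - a) : gammaRatio a t ≤ 1 := by
  have := Gamma_pos_of_pos hta
  have : 0 < t := by linarith
  exact div_le_one_of_le₀ (Gamma_le_Gamma_sub_mul_rpow ha hta) (by positivity)

lemma tendsto_gammaRatio {a : ℝ} (ha : 0 ≤ a) : Tendsto (gammaRatio a) atTop (𝓝 1) := by
  have hbase : Tendsto (fun t : ℝ => 1 - (a + 1) / t) atTop (𝓝 1) := by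
    simpa using (tendsto_const_nhds (x := (1 : ℝ))).sub
      ((tendsto_const_nhds (x := a + 1)).div_atTop tendsto_id)
  have hlow := hbase.rpow_const (p := a) (Or.inr ha)
  rw [one_rpow] at hlow
  refine tendsto_of_tendsto_of_tendsto_of_le_of_le' hlow tendsto_const_nhds ?_ ?_
  · filter_upwards [eventually_gt_atTop (a + 1)] with t ht
    have ht0 : 0 < t := by linarith
    have hG := Gamma_pos_of_pos (by linarith : 0 < t - a)
    rw [gammaRatio, le_div_iff₀ (by positivity), show 1 - (a + 1) / t = (t - a - 1) / t by
      field_simp; ring, div_rpow (by linarith) ht0.le]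
    calc (t - a - 1) ^ a / t ^ a * (Gamma (t - a) * t ^ a)
        = Gamma (t - a) * (t - a - 1) ^ a := by field_simp
      _ ≤ Gamma t := Gamma_sub_mul_rpow_le_Gamma ha (by linarith)
  · filter_upwards [eventually_gt_atTop a] with t ht
    exact gammaRatio_le_one ha (by linarith)

lemma summable_pow_div_Gamma_natCast_add {β : ℝ} (hβ : 0 < β) (y : ℝ) :
    Summable (fun k : ℕ => y ^ k / Gamma (k + β)) := by
  refine summable_of_ratio_norm_eventually_le (r := 1 / 2) (by norm_num) ?_
  filter_upwards [eventually_ge_atTop ⌈2 * |y|⌉₊] with k hk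
  have hkβ : 0 < (k : ℝ) + β := by positivity
  have hk' : 2 * |y| ≤ k := (Nat.ceil_le).1 hk
  have hstep :
      y ^ (k + 1) / Gamma ((k + 1 : ℕ) + β) = y / (k + β) * (y ^ k / Gamma (k + β)) := by
    rw [Nat.cast_succ, add_right_comm, Gamma_add_one hkβ.ne', pow_succ]
    field_simp
  have hratio : |y| / (k + β) ≤ 1 / 2 := by
    rw [div_le_iff₀ hkβ]
    linarith
  rw [hstep, norm_mul, Real.norm_eq_abs (y / _), abs_div, abs_of_pos hkβ]
  gcongr

lemma tendsto_sum_range_of_dominated {α G : Type*} [NormedAddCommGroup G] [CompleteSpace G]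
    {𝓕 : Filter α} {c : α → ℕ} (hc : Tendsto c 𝓕 atTop) {f : α → ℕ → G} {g : ℕ → G}
    {bound : ℕ → ℝ} (h_sum : Summable bound) (h_lim : ∀ k, Tendsto (f · k) 𝓕 (𝓝 (g k)))
    (h_bound : ∀ᶠ a in 𝓕, ∀ k < c a, ‖f a k‖ ≤ bound k) :
    Tendsto (fun a => ∑ k ∈ range (c a), f a k) 𝓕 (𝓝 (∑' k, g k)) := by
  refine Tendsto.congr (fun a => (sum_eq_tsum_indicator (f a) (range (c a))).symm) ?_
  -- `bound` need not be nonnegative beyond the cutoff, so dominate by `|bound|`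
  refine tendsto_tsum_of_dominated_convergence h_sum.abs (fun k => (h_lim k).congr' ?_) ?_
  · filter_upwards [hc.eventually_gt_atTop k] with a ha
    simp [ha]
  · filter_upwards [h_bound] with a ha k
    by_cases hk : k < c a
    · simpa [hk] using (ha k hk).trans (le_abs_self _)
    · simp [hk]

lemma tendsto_atTop_of_natCast_le {c : ℕ → ℕ} {u : ℕ → ℝ} (hc : Tendsto c atTop atTop)
    (hcu : ∀ᶠ N in atTop, (c N : ℝ) ≤ u N) : Tendsto u atTop atTop :=
  tendsto_atTop_mono' _ hcu (tendsto_natCast_atTop_atTop.comp hc)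

lemma rpow_mul_qS_eq_sum {n L y : ℝ} (hp : 0 < L + n + 1) (hy : 0 ≤ y) (N : ℕ) :
    (y / (L + n + 1)) ^ L * qS n L N (y / (L + n + 1)) =
      ∑ k ∈ range (N + 1),
        y ^ L * (y ^ k / Gamma (k + (L + 1))) * gammaRatio (L + k) (L + n + 1) := by
  rw [qS, mul_sum]
  refine sum_congr rfl fun k _ => ?_
  rw [gammaRatio, show L + n + 1 - (L + k) = n + 1 - k by ring, rpow_add hp, rpow_natCast,
    div_rpow hy hp.le, div_pow, ← add_assoc]
  ring

lemma tendsto_rpow_mul_qS {L y : ℝ} (hL : 0 < L) (hy : 0 ≤ y) {n : ℕ → ℝ} {c : ℕ → ℕ}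
    (hc : Tendsto c atTop atTop) (hcn : ∀ᶠ N in atTop, (c N : ℝ) < n N + 1) :
    Tendsto (fun N => (y / (L + n N + 1)) ^ L * qS (n N) L (c N) (y / (L + n N + 1))) atTop
      (𝓝 (y ^ L * mittagLeffler1 (L + 1) y)) := by
  have hp : Tendsto (fun N => L + n N + 1) atTop atTop :=
    tendsto_atTop_of_natCast_le hc (hcn.mono fun N h => by linarith)
  have hsum := (summable_pow_div_Gamma_natCast_add (by linarith : 0 < L + 1) y).mul_left (y ^ L)
  rw [mittagLeffler1, ← tsum_mul_left]
  refine (tendsto_sum_range_of_dominated (c := fun N => c N + 1)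
    (f := fun N k => y ^ L * (y ^ k / Gamma (k + (L + 1))) * gammaRatio (L + k) (L + n N + 1))
    ((tendsto_add_atTop_nat 1).comp hc) hsum (fun k => ?_) ?_).congr' ?_
  · simpa using ((tendsto_gammaRatio (by positivity : 0 ≤ L + k)).comp hp).const_mul
      (y ^ L * (y ^ k / Gamma (k + (L + 1))))
  · filter_upwards [hcn] with N hN k hk
    have hkn : (k : ℝ) < n N + 1 := by
      have : (k : ℝ) ≤ c N := by exact_mod_cast Nat.lt_succ_iff.1 hk
      linarith
    have hGk := Gamma_pos_of_pos (by positivity : (0 : ℝ) < k + (L + 1))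
    rw [norm_mul, norm_of_nonneg (by positivity),
      norm_of_nonneg (gammaRatio_nonneg (by linarith) (by linarith))]
    exact mul_le_of_le_one_right (by positivity)
      (gammaRatio_le_one (by positivity) (by linarith))
  · filter_upwards [hcn] with N hN
    rw [rpow_mul_qS_eq_sum (by linarith [(c N).cast_nonneg (α := ℝ)]) hy]

lemma tendsto_rpow_mul_qhat {L y : ℝ} (hL : 0 < L) (hy : 0 ≤ y) (hyL : y ≠ L) {n : ℕ → ℝ}
    {c : ℕ → ℕ} (hc : Tendsto c atTop atTop) (hcn : ∀ᶠ N in atTop, (c N : ℝ) < n N + 1) :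
    Tendsto (fun N => (y / (L + n N + 1)) ^ L *
        qhat (n N) L (c N) (y / (L + n N + 1)) (y / (L + n N + 1))) atTop
      (𝓝 (y ^ L * mittagLeffler1 (L + 1) y + 1 / (y - L) * (y ^ L / Gamma L))) := by
  have hp : Tendsto (fun N => L + n N + 1) atTop atTop :=
    tendsto_atTop_of_natCast_le hc (hcn.mono fun N h => by linarith)
  have hnx : Tendsto (fun N => n N * (y / (L + n N + 1)) - L) atTop (𝓝 (y - L)) := by
    have h := ((tendsto_const_nhds (x := y)).sub
      ((tendsto_const_nhds (x := y * (L + 1))).div_atTop hp)).sub_const L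
    rw [sub_zero] at h
    refine h.congr' ?_
    filter_upwards [hp.eventually_gt_atTop 0] with N hN
    field_simp
    ring
  have htail := ((hnx.inv₀ (sub_ne_zero.2 hyL)).mul_const (y ^ L / Gamma L)).mul
    ((tendsto_gammaRatio hL.le).comp hp)
  rw [mul_one, ← one_div] at htail
  refine ((tendsto_rpow_mul_qS hL hy hc hcn).add htail).congr' ?_
  filter_upwards [hp.eventually_gt_atTop 0] with N hN
  simp only [Function.comp_apply, qhat, gammaRatio, mul_add, div_rpow hy hN.le,
    show L + n N + 1 - L = n N + 1 by ring]
  ring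

lemma tendsto_one_add_div_rpow_neg (y : ℝ) :
    Tendsto (fun t : ℝ => (1 + y / t) ^ (-t)) atTop (𝓝 (exp (-y))) := by
  have h := (tendsto_one_add_div_rpow_exp y).inv₀ (exp_ne_zero y)
  rw [← exp_neg] at h
  have hbase : Tendsto (fun t : ℝ => 1 + y / t) atTop (𝓝 1) := by
    simpa using (tendsto_const_nhds (x := (1 : ℝ))).add
      ((tendsto_const_nhds (x := y)).div_atTop tendsto_id)
  refine h.congr' ?_
  filter_upwards [hbase.eventually_const_lt zero_lt_one] with t ht
  rw [rpow_neg ht.le]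

lemma div_natCast_mul_ghat_mul_rpow (n L x : ℝ) (N : ℕ) :
    1 / N * ghat n L N x * x ^ L =
      (L + N + 1) / N * (x ^ L * qhat n L (N + 1) x x) -
        x * ((n - N - 1) / N) * (x ^ L * qhat n L N x x) := by
  rw [ghat]
  ring

lemma tendsto_ghat_mul_rpow {L b y : ℝ} (hL : 0 < L) (hb : 0 < b) (hy : 0 ≤ y) (hyL : y ≠ L) :
    Tendsto (fun N : ℕ => 1 / N * ghat ((b + 1) * N) L N (y / (L + (b + 1) * N + 1)) *
        (y / (L + (b + 1) * N + 1)) ^ L *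
        (1 + y / (L + (b + 1) * N + 1)) ^ (-(L + (b + 1) * N + 1))) atTop
      (𝓝 ((y ^ L * mittagLeffler1 (L + 1) y + 1 / (y - L) * (y ^ L / Gamma L)) * exp (-y))) := by
  set n : ℕ → ℝ := fun N => (b + 1) * N
  have hp : Tendsto (fun N : ℕ => L + n N + 1) atTop atTop :=
    tendsto_atTop_of_natCast_le tendsto_id (.of_forall fun N => by simp [n]; nlinarith)
  have hX₁ := tendsto_rpow_mul_qhat hL hy hyL (n := n) (tendsto_add_atTop_nat 1)
    (eventually_ge_atTop 1 |>.mono fun N hN => by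
      have : (1 : ℝ) ≤ N := by exact_mod_cast hN
      simp [n]; nlinarith)
  have hX₀ := tendsto_rpow_mul_qhat hL hy hyL (n := n) tendsto_id
    (.of_forall fun N => by simp [n]; nlinarith)
  have hA : Tendsto (fun N : ℕ => (L + N + 1) / N) atTop (𝓝 1) := by
    have h := (tendsto_const_div_atTop_nhds_zero_nat (L + 1)).const_add 1
    rw [add_zero] at h
    refine h.congr' ?_
    filter_upwards [eventually_ne_atTop 0] with N hN
    field_simp
    ring
  have hB : Tendsto (fun N : ℕ => y / (L + n N + 1) * ((n N - N - 1) / N)) atTop (𝓝 0) := by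
    have h := ((tendsto_const_nhds (x := y)).div_atTop hp).mul
      ((tendsto_const_div_atTop_nhds_zero_nat 1).const_sub b)
    rw [zero_mul] at h
    refine h.congr' ?_
    filter_upwards [eventually_ne_atTop 0] with N hN
    simp only [n]
    field_simp
    ring
  have h := ((hA.mul hX₁).sub (hB.mul hX₀)).mul ((tendsto_one_add_div_rpow_neg y).comp hp)
  rw [one_mul, zero_mul, sub_zero] at h
  refine h.congr fun N => ?_
  rw [div_natCast_mul_ghat_mul_rpow]
  rfl

/-- Singular-origin asymptotics of the on-diagonal overlap prefactor `ĝ_N · ω̂` of the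
induced spherical unitary ensemble. -/
theorem ghat_singular_origin_asymptotics (L b : ℝ) (hL : 0 < L) (hb : 0 < b)
    (χ : ℝ) (hχ : 0 < χ) (hχL : χ ^ 2 ≠ L) :
    Tendsto (fun N : ℕ =>
      let nN : ℝ := (b + 1) * N
      let δN : ℝ := (nN + L + 1) / N
      let lamN : ℝ := χ / Real.sqrt (N * δN)
      (1 / (N : ℝ)) * ghat nN L N (lamN ^ 2) * lamN ^ (2 * L) * (1 + lamN ^ 2) ^ (-(nN + L + 1)))
      atTop
      (nhds ((χ ^ 2) ^ L *
        ((χ ^ 2 - L) * mittagLeffler1 (L + 1) (χ ^ 2) + 1 / Real.Gamma L) *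
        Real.exp (-χ ^ 2) / (χ ^ 2 - L))) := by
  set y := χ ^ 2
  convert (tendsto_ghat_mul_rpow hL hb (by positivity : 0 ≤ y) hχL).congr' ?_ using 2
  · field_simp
  filter_upwards [eventually_ne_atTop 0] with N hN
  have hpN : (N : ℝ) * (((b + 1) * N + L + 1) / N) = L + (b + 1) * N + 1 := by
    field_simp
    ring
  have hsq : (χ / √(N * (((b + 1) * N + L + 1) / N))) ^ 2 = y / (L + (b + 1) * N + 1) := by
    rw [div_pow, sq_sqrt (by positivity), hpN]
  have hrpow : (χ / √(N * (((b + 1) * N + L + 1) / N))) ^ (2 * L) =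
      (y / (L + (b + 1) * N + 1)) ^ L := by
    rw [rpow_mul (by positivity), rpow_two, hsq]
  dsimp only
  rw [hsq, hrpow, show -((b + 1) * N + L + 1) = -(L + (b + 1) * N + 1) by ring]
end
end

section
/- Let q ≥ 0, L ≥ 1 and n be integers with n ≥ q+2, and let x > 0 be a real number with n·x ≠ L and g_j^{(n,L)}(x) ≠ 0 for all 0 ≤ j ≤ q+1. Then ∑_{j=0}^{q} (Γ(n+L+1)/(Γ(j+L+2)·Γ(n−j−1))) · x^j/(g_{j+1}^{(n,L)}(x)·g_j^{(n,L)}(x)) = (Γ(n+1)·Γ(L+1)/Γ(n+L+1)) · ((n−1)·x − (L+1))/(x·(x − L/n)) + (−(n−q−2)·x + L+q+2)/(x·(x − L/n)·g_{q+1}^{(n,L)}(x)). -/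
open Finset

noncomputable section

/-!
Write `c_k = C(L+n, L+k)`, `T_m = ∑_{k ≤ m} c_k x^k`, `S_m = ∑_{k ≤ m} (m+1-k) c_k x^k` and
`A_j = L + j + 1 - (n-j-1) x` (`coeff`, `partialSum`, `weightedPartialSum`, `numer` below).
Then `n x g_m = (n x - L) S_m + L (m+1) c_0`, and the absorption identity
`(L+k+1) c_{k+1} = (n-k) c_k` gives, by induction on `j`,
`(x+1) S_j - A_j T_{j+1} + L c_0 = (n-j-1) c_{j+1} x^{j+2}`.
Together these yield `n x (A_{j+1} g_j - A_j g_{j+1}) = (n-j-1) c_{j+1} x^{j+2} (n x - L)`.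
As the Gamma quotient in the `j`-th summand is `(n-j-1) c_{j+1}`, that summand is
`F (j+1) - F j` with `F j = A_j / (x (x - L/n) g_j)`, so the sum telescopes to `F (q+1) - F 0`,
and `g_0 = c_0 = Γ(n+L+1) / (Γ(n+1) Γ(L+1))`.
-/

namespace Real

theorem Gamma_add_add_one_div_Gamma_add_one_mul_Gamma_add_one (a b : ℕ) :
    Gamma ((a : ℝ) + b + 1) / (Gamma ((a : ℝ) + 1) * Gamma ((b : ℝ) + 1)) = (a + b).choose a := by
  rw [← Nat.cast_add, Gamma_nat_eq_factorial, Gamma_nat_eq_factorial, Gamma_nat_eq_factorial,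
    Nat.cast_add_choose]

theorem Gamma_add_add_one_div_Gamma_add_one_mul_Gamma (a b : ℕ) :
    Gamma ((a : ℝ) + b + 1) / (Gamma ((a : ℝ) + 1) * Gamma b) = b * (a + b).choose a := by
  rcases eq_or_ne b 0 with rfl | hb
  · simp
  have hb' : (b : ℝ) ≠ 0 := Nat.cast_ne_zero.mpr hb
  rw [← Gamma_add_add_one_div_Gamma_add_one_mul_Gamma_add_one, Gamma_add_one hb']
  field_simp

end Real

theorem Nat.cast_choose_succ_right_eq {R : Type*} [Ring R] (N m : ℕ) :
    (N.choose (m + 1) : R) * (m + 1) = N.choose m * (N - m) := by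
  rcases le_or_gt m N with hm | hm
  · have h := congrArg (Nat.cast : ℕ → R) (Nat.choose_succ_right_eq N m)
    push_cast [hm] at h
    exact h
  · simp [Nat.choose_eq_zero_of_lt hm, Nat.choose_eq_zero_of_lt (hm.trans (Nat.lt_succ_self m))]

namespace Phi

variable (n L : ℕ) (x : ℝ)

def coeff (k : ℕ) : ℝ := (L + n).choose (L + k)

def partialSum (m : ℕ) : ℝ := ∑ k ∈ range (m + 1), coeff n L k * x ^ k

def weightedPartialSum (m : ℕ) : ℝ := ∑ k ∈ range (m + 1), ((m : ℝ) + 1 - k) * coeff n L k * x ^ k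

def numer (j : ℕ) : ℝ := -((n : ℝ) - j - 1) * x + L + j + 1

def primitive (j : ℕ) : ℝ := numer n L x j / (x * (x - L / n) * gP n L j x)

theorem succ_mul_coeff_succ (k : ℕ) :
    ((L : ℝ) + k + 1) * coeff n L (k + 1) = ((n : ℝ) - k) * coeff n L k := by
  have h := Nat.cast_choose_succ_right_eq (R := ℝ) (L + n) (L + k)
  push_cast at h
  rw [coeff, coeff, ← add_assoc]
  linear_combination h

theorem weightedPartialSum_succ (m : ℕ) :
    weightedPartialSum n L x (m + 1) = weightedPartialSum n L x m + partialSum n L x (m + 1) := by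
  have split : ∀ k ∈ range (m + 2), ((↑(m + 1) : ℝ) + 1 - k) * coeff n L k * x ^ k
      = ((m : ℝ) + 1 - k) * coeff n L k * x ^ k + coeff n L k * x ^ k := by
    intro k _
    push_cast
    ring
  rw [weightedPartialSum, sum_congr rfl split, sum_add_distrib, sum_range_succ _ (m + 1)]
  simp [weightedPartialSum, partialSum]

theorem add_one_mul_weightedPartialSum_sub_numer_mul_partialSum (j : ℕ) :
    (x + 1) * weightedPartialSum n L x j - numer n L x j * partialSum n L x (j + 1)
        + L * coeff n L 0 = ((n : ℝ) - j - 1) * coeff n L (j + 1) * x ^ (j + 2) := by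
  induction j with
  | zero =>
    simp only [weightedPartialSum, partialSum, numer, sum_range_succ]
    linear_combination -x * succ_mul_coeff_succ n L 0
  | succ j ih =>
    have hT : partialSum n L x (j + 2)
        = partialSum n L x (j + 1) + coeff n L (j + 2) * x ^ (j + 2) := sum_range_succ _ _
    have absorb := succ_mul_coeff_succ n L (j + 1)
    rw [weightedPartialSum_succ, hT]
    simp only [numer] at ih ⊢
    push_cast at ih absorb ⊢
    linear_combination ih - x ^ (j + 2) * absorb

theorem gP_mul_eq_weightedPartialSum (m : ℕ) (hx : x ≠ 0) (hn : (n : ℝ) ≠ 0) :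
    gP n L m x * (n * x)
      = (n * x - L) * weightedPartialSum n L x m + L * (m + 1) * coeff n L 0 := by
  simp only [gP, weightedPartialSum, coeff, Nat.add_zero]
  field_simp

theorem gP_zero (hx : x ≠ 0) : gP n L 0 x = coeff n L 0 := by
  simp only [gP, coeff, zero_add, sum_range_one, Nat.add_zero, Nat.cast_zero, pow_zero]
  field_simp
  ring

theorem numer_mul_gP_sub_numer_mul_gP (j : ℕ) (hx : x ≠ 0) (hn : (n : ℝ) ≠ 0) :
    n * x * (numer n L x (j + 1) * gP n L j x - numer n L x j * gP n L (j + 1) x)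
      = ((n : ℝ) - j - 1) * coeff n L (j + 1) * x ^ (j + 2) * (n * x - L) := by
  have hj := gP_mul_eq_weightedPartialSum n L x j hx hn
  have hj' := gP_mul_eq_weightedPartialSum n L x (j + 1) hx hn
  rw [weightedPartialSum_succ] at hj'
  have key := add_one_mul_weightedPartialSum_sub_numer_mul_partialSum n L x j
  simp only [numer] at key ⊢
  push_cast at hj' ⊢
  linear_combination (-((n : ℝ) - j - 1) * x + L + j + 2 + x) * hj
    - (-((n : ℝ) - j - 1) * x + L + j + 1) * hj' + (n * x - L) * key

theorem Gamma_div_Gamma_mul_Gamma_eq_coeff (j : ℕ) (hj : j + 1 ≤ n) :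
    Real.Gamma ((n : ℝ) + L + 1) / (Real.Gamma ((j : ℝ) + L + 2) * Real.Gamma ((n : ℝ) - j - 1))
      = ((n : ℝ) - j - 1) * coeff n L (j + 1) := by
  obtain ⟨b, rfl⟩ := Nat.exists_eq_add_of_le hj
  have h := Real.Gamma_add_add_one_div_Gamma_add_one_mul_Gamma (L + (j + 1)) b
  rw [coeff, show L + (j + 1 + b) = L + (j + 1) + b by ring]
  convert h using 4 <;> push_cast <;> ring

theorem Gamma_mul_Gamma_div_Gamma_eq_inv_coeff :
    Real.Gamma ((n : ℝ) + 1) * Real.Gamma ((L : ℝ) + 1) / Real.Gamma ((n : ℝ) + L + 1)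
      = (coeff n L 0)⁻¹ := by
  rw [coeff, Nat.add_zero, ← Real.Gamma_add_add_one_div_Gamma_add_one_mul_Gamma_add_one,
    inv_div, add_comm (n : ℝ) L, mul_comm (Real.Gamma _)]

theorem summand_eq_primitive_sub (j : ℕ) (hx : x ≠ 0) (hxL : (n : ℝ) * x ≠ L) (hj : j + 1 ≤ n)
    (hgj : gP n L j x ≠ 0) (hgj' : gP n L (j + 1) x ≠ 0) :
    Real.Gamma ((n : ℝ) + L + 1) / (Real.Gamma ((j : ℝ) + L + 2) * Real.Gamma ((n : ℝ) - j - 1))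
        * (x ^ j / (gP n L (j + 1) x * gP n L j x))
      = primitive n L x (j + 1) - primitive n L x j := by
  have hn : (n : ℝ) ≠ 0 := Nat.cast_ne_zero.mpr (by omega)
  have hxL' : (n : ℝ) * x - L ≠ 0 := sub_ne_zero.mpr hxL
  have key := numer_mul_gP_sub_numer_mul_gP n L x j hx hn
  rw [Gamma_div_Gamma_mul_Gamma_eq_coeff n L j hj, primitive, primitive,
    show x - L / n = (n * x - L) / n by field_simp]
  field_simp
  exact mul_right_cancel₀ hx (by linear_combination -key)

end Phi

theorem Phi_closed_form_general (q L n : ℕ) (hn : q + 2 ≤ n)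
    (x : ℝ) (hx : 0 < x) (hxL : (n : ℝ) * x ≠ L)
    (hg : ∀ j ≤ q + 1, gP n L j x ≠ 0) :
    (∑ j ∈ Finset.range (q + 1),
        Real.Gamma ((n : ℝ) + L + 1) /
            (Real.Gamma ((j : ℝ) + L + 2) * Real.Gamma ((n : ℝ) - j - 1)) *
          (x ^ j / (gP n L (j + 1) x * gP n L j x)))
      = Real.Gamma ((n : ℝ) + 1) * Real.Gamma ((L : ℝ) + 1) / Real.Gamma ((n : ℝ) + L + 1) *
          ((((n : ℝ) - 1) * x - ((L : ℝ) + 1)) / (x * (x - (L : ℝ) / n)))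
        + (-(((n : ℝ) - q - 2)) * x + (L : ℝ) + q + 2) /
            (x * (x - (L : ℝ) / n) * gP n L (q + 1) x) := by
  have telescoping : ∀ j ∈ range (q + 1),
      Real.Gamma ((n : ℝ) + L + 1) /
          (Real.Gamma ((j : ℝ) + L + 2) * Real.Gamma ((n : ℝ) - j - 1)) *
        (x ^ j / (gP n L (j + 1) x * gP n L j x))
        = Phi.primitive n L x (j + 1) - Phi.primitive n L x j := by
    intro j hj
    rw [mem_range] at hj
    exact Phi.summand_eq_primitive_sub n L x j hx.ne' hxL (by omega) (hg j (by omega))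
      (hg (j + 1) (by omega))
  rw [sum_congr rfl telescoping, sum_range_sub, Phi.primitive, Phi.primitive,
    Phi.gP_zero n L x hx.ne', Phi.Gamma_mul_Gamma_div_Gamma_eq_inv_coeff, Phi.numer, Phi.numer]
  simp only [div_eq_mul_inv, mul_inv]
  push_cast
  ring

/-- Closed form of the partial sum `Φ_q^{(n,L)}(x)`. -/
theorem Phi_closed_form (q L n : ℕ) (hL : 1 ≤ L) (hn : q + 2 ≤ n)
    (x : ℝ) (hx : 0 < x) (hxL : (n : ℝ) * x ≠ L)
    (hg : ∀ j ≤ q + 1, gP n L j x ≠ 0) :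
    (∑ j ∈ Finset.range (q + 1),
        Real.Gamma ((n : ℝ) + L + 1) /
            (Real.Gamma ((j : ℝ) + L + 2) * Real.Gamma ((n : ℝ) - j - 1)) *
          (x ^ j / (gP n L (j + 1) x * gP n L j x)))
      = Real.Gamma ((n : ℝ) + 1) * Real.Gamma ((L : ℝ) + 1) / Real.Gamma ((n : ℝ) + L + 1) *
          ((((n : ℝ) - 1) * x - ((L : ℝ) + 1)) / (x * (x - (L : ℝ) / n)))
        + (-(((n : ℝ) - q - 2)) * x + (L : ℝ) + q + 2) /
            (x * (x - (L : ℝ) / n) * gP n L (q + 1) x) :=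
  Phi_closed_form_general q L n hn x hx hxL hg
end
end
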